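/- arXiv:2101.05142 — 2 statements merged into one kernel-verified Lean document; each statement's English description precedes it below -/
import Mathlib

section
/- Let A ∈ F_p^{m×n}, b ∈ F_p^m, and d ∈ F_p^n. If A·d = 0 then the renaming Δ_d maps the clause set F(A,b) into itself, i.e., Δ_d(F(A,b)) ⊆ F(A,b). -/
/-! Encoding of linear equations over `F_p` as CNF formulas, with variables
`ξ_{i,k}` for `i : Fin n`, `k : ZMod p`. -/

/-- `supp` of a vector: the set of indices with nonzero entry. -/
def suppV {n : ℕ} {K : Type*} [Zero K] [DecidableEq K] (a : Fin n → K) : Finset (Fin n) :=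
  Finset.univ.filter (fun i => a i ≠ 0)

/-- `P(a,c)` : assignments violating the equation `a·x = c`, supported on `supp(a)`. -/
def PViol {n p : ℕ} (a : Fin n → ZMod p) (c : ZMod p) : Set (Fin n → ZMod p) :=
  {x | dotProduct a x ≠ c ∧ suppV x ⊆ suppV a}

/-- The clause `C_a(x) = ⋁_{i ∈ supp(a)} ¬ξ_{i,x_i}`. -/
def CCl {n p : ℕ} (a x : Fin n → ZMod p) : Finset ((Fin n × ZMod p) × Bool) :=
  (suppV a).image (fun i => ((i, x i), false))

/-- The CNF formula `F(a,c)` for a single equation `a·x = c`. -/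
def FEq {n p : ℕ} (a : Fin n → ZMod p) (c : ZMod p) :
    Set (Finset ((Fin n × ZMod p) × Bool)) :=
  (fun x => CCl a x) '' (PViol a c)

/-- The CNF formula `F(A,b)` for a system of equations. -/
def FSys {m n p : ℕ} (A : Matrix (Fin m) (Fin n) (ZMod p)) (b : Fin m → ZMod p) :
    Set (Finset ((Fin n × ZMod p) × Bool)) :=
  ⋃ i, FEq (A i) (b i)

/-- The clauses `V = ⋀_i ⋁_k ξ_{i,k}`. -/
def VCl (n p : ℕ) [NeZero p] : Set (Finset ((Fin n × ZMod p) × Bool)) :=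
  {C | ∃ i : Fin n, C = Finset.univ.image (fun k : ZMod p => ((i, k), true))}

/-- The renaming `Δ_d` on literals: `ξ_{i,k} ↦ ξ_{i,k+d_i}` (preserving polarity). -/
def DeltaLit {n p : ℕ} (d : Fin n → ZMod p) (l : (Fin n × ZMod p) × Bool) :
    (Fin n × ZMod p) × Bool :=
  ((l.1.1, l.1.2 + d l.1.1), l.2)

/-- `Δ_d` applied to a clause, literal by literal. -/
def DeltaCl {n p : ℕ} (d : Fin n → ZMod p) (C : Finset ((Fin n × ZMod p) × Bool)) :
    Finset ((Fin n × ZMod p) × Bool) :=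
  C.image (DeltaLit d)

theorem DeltaCl_CCl {n p : ℕ} (d a x : Fin n → ZMod p) :
    DeltaCl d (CCl a x) = CCl a (x + d) := by
  simp only [DeltaCl, CCl, Finset.image_image]
  rfl

theorem CCl_congr {n p : ℕ} {a x y : Fin n → ZMod p} (hxy : ∀ i ∈ suppV a, x i = y i) :
    CCl a x = CCl a y :=
  Finset.image_congr fun i hi => by simp only [hxy i hi]

/-- Zeroing `y` outside `supp a` changes neither `a ⬝ᵥ y` nor the clause, so the support
condition in `P(a,c)` is no restriction. -/
theorem CCl_mem_FEq {n p : ℕ} {a y : Fin n → ZMod p} {c : ZMod p} (hy : a ⬝ᵥ y ≠ c) :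
    CCl a y ∈ FEq a c := by
  set y' : Fin n → ZMod p := fun j => if a j = 0 then 0 else y j
  have hdot : a ⬝ᵥ y' = a ⬝ᵥ y :=
    Finset.sum_congr rfl fun j _ => by by_cases hj : a j = 0 <;> simp [y', hj]
  have hsupp : suppV y' ⊆ suppV a := by
    intro j
    simp only [suppV, Finset.mem_filter, Finset.mem_univ, true_and]
    exact fun hj haj => hj (if_pos haj)
  refine ⟨y', ⟨hdot ▸ hy, hsupp⟩, CCl_congr fun j hj => ?_⟩
  exact if_neg (Finset.mem_filter.mp hj).2

theorem DeltaCl_image_FEq_subset {n p : ℕ} {a d : Fin n → ZMod p} (c : ZMod p)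
    (h : a ⬝ᵥ d = 0) : DeltaCl d '' FEq a c ⊆ FEq a c := by
  rintro _ ⟨_, ⟨x, ⟨hx, -⟩, rfl⟩, rfl⟩
  rw [DeltaCl_CCl]
  exact CCl_mem_FEq (by rwa [dotProduct_add, h, add_zero])

theorem stmt5_general {p m n : ℕ}
    (A : Matrix (Fin m) (Fin n) (ZMod p)) (b : Fin m → ZMod p)
    (d : Fin n → ZMod p) (h : A.mulVec d = 0) :
    DeltaCl d '' FSys A b ⊆ FSys A b := by
  simp only [FSys, Set.image_iUnion]
  exact Set.iUnion_mono fun i => DeltaCl_image_FEq_subset (b i) (congrFun h i)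

/-- If `A·d = 0` then the renaming `Δ_d` maps `F(A,b)` into itself. -/
theorem stmt5 {p m n : ℕ} [Fact (Nat.Prime p)]
    (A : Matrix (Fin m) (Fin n) (ZMod p)) (b : Fin m → ZMod p)
    (d : Fin n → ZMod p) (h : A.mulVec d = 0) :
    DeltaCl d '' FSys A b ⊆ FSys A b :=
  stmt5_general A b d h
end

section
/- Weakening under a side literal set: let A be a set of clauses with A ⊢ ⊥ (resolution refutable), let d be a clause, and let B be a set of clauses such that every clause of the form c ∨ d with c ∈ A contains some clause of B as a subset (i.e., {c ∨ d | c ∈ A} ⊑ B). Then from B one can derive by resolution a clause that is a subset of d. -/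
/-! Resolution proof system: clauses are finite sets of literals, a literal is
a pair (variable, polarity). -/

variable {V : Type} [DecidableEq V]

/-- `C` is a resolvent of `C₁` and `C₂` (on some variable `x`). -/
def Resolvent (C₁ C₂ C : Finset (V × Bool)) : Prop :=
  ∃ x : V, (x, true) ∈ C₁ ∧ (x, false) ∈ C₂ ∧
    C = C₁.erase (x, true) ∪ C₂.erase (x, false)

/-- A resolution derivation from the clause set `A`, newest clause first:
each listed clause is a resolvent of two clauses that are in `A` or occur later
in the list. -/
def IsDerivation (A : Set (Finset (V × Bool))) : List (Finset (V × Bool)) → Prop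
  | [] => True
  | c :: rest => IsDerivation A rest ∧
      ∃ c₁ c₂, (c₁ ∈ A ∨ c₁ ∈ rest) ∧ (c₂ ∈ A ∨ c₂ ∈ rest) ∧ Resolvent c₁ c₂ c

/-- `Derives A n B` : every clause of `B` can be obtained from `A` by a single
resolution derivation adding at most `n` resolvents. -/
def Derives (A : Set (Finset (V × Bool))) (n : ℕ) (B : Set (Finset (V × Bool))) : Prop :=
  ∃ L : List (Finset (V × Bool)), IsDerivation A L ∧ L.length ≤ n ∧
    B ⊆ A ∪ {c | c ∈ L}

/-- A Boolean assignment satisfies a clause if it makes some literal true. -/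
def SatClause (φ : V → Bool) (C : Finset (V × Bool)) : Prop :=
  ∃ l ∈ C, φ l.1 = l.2

/-- An assignment satisfies a set of clauses if it satisfies each of them. -/
def SatSet (φ : V → Bool) (A : Set (Finset (V × Bool))) : Prop :=
  ∀ C ∈ A, SatClause φ C

/-! The refutation of `A` is replayed on `B`, tracking for every clause `c` derived from `A`
a clause derivable from `B` inside `c ∪ d`. At a resolution step on `x`, either both tracked
clauses still contain their clashing literal, and resolving them on `x` tracks the resolvent, or
one of them misses it and already lies inside the resolvent `∪ d`. The tracked clause of `⊥` is
the required subclause of `d`. -/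

namespace IsDerivation

variable {A : Set (Finset (V × Bool))}

lemma append {L₁ L₂ : List (Finset (V × Bool))}
    (h₁ : IsDerivation A L₁) (h₂ : IsDerivation A L₂) : IsDerivation A (L₁ ++ L₂) := by
  induction L₁ with
  | nil => simpa using h₂
  | cons c rest ih =>
    obtain ⟨hrest, c₁, c₂, hc₁, hc₂, hres⟩ := h₁
    exact ⟨ih hrest, c₁, c₂, hc₁.imp_right (List.mem_append_left L₂),
      hc₂.imp_right (List.mem_append_left L₂), hres⟩

lemma forall_mem {P : Finset (V × Bool) → Prop} (hA : ∀ c ∈ A, P c)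
    (hres : ∀ c₁ c₂ c, P c₁ → P c₂ → Resolvent c₁ c₂ c → P c) :
    ∀ {L}, IsDerivation A L → ∀ c ∈ L, P c
  | [], _, _, h => by simp at h
  | c₀ :: rest, ⟨hrest, c₁, c₂, hc₁, hc₂, hc₀⟩, c, hc => by
    have ih := forall_mem hA hres hrest
    rcases List.mem_cons.mp hc with rfl | hc
    · exact hres c₁ c₂ c (hc₁.elim (hA c₁) (ih c₁)) (hc₂.elim (hA c₂) (ih c₂)) hc₀
    · exact ih c hc

end IsDerivation

def Derivable (A : Set (Finset (V × Bool))) (c : Finset (V × Bool)) : Prop :=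
  ∃ L, IsDerivation A L ∧ (c ∈ A ∨ c ∈ L)

namespace Derivable

variable {A : Set (Finset (V × Bool))} {c : Finset (V × Bool)}

lemma of_mem (h : c ∈ A) : Derivable A c := ⟨[], trivial, Or.inl h⟩

lemma resolvent {c₁ c₂ : Finset (V × Bool)} (h₁ : Derivable A c₁) (h₂ : Derivable A c₂)
    (h : Resolvent c₁ c₂ c) : Derivable A c := by
  obtain ⟨L₁, hL₁, hc₁⟩ := h₁
  obtain ⟨L₂, hL₂, hc₂⟩ := h₂
  exact ⟨c :: (L₁ ++ L₂), ⟨hL₁.append hL₂, c₁, c₂, by grind, by grind, h⟩, Or.inr (by simp)⟩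

lemma induction {P : Finset (V × Bool) → Prop} (hA : ∀ c ∈ A, P c)
    (hres : ∀ c₁ c₂ c, P c₁ → P c₂ → Resolvent c₁ c₂ c → P c) (h : Derivable A c) : P c := by
  obtain ⟨L, hL, hc | hc⟩ := h
  exacts [hA c hc, hL.forall_mem hA hres c hc]

lemma of_derives {n : ℕ} (h : Derives A n {c}) : Derivable A c := by
  obtain ⟨L, hL, -, hc⟩ := h
  exact ⟨L, hL, hc rfl⟩

lemma exists_derives (h : Derivable A c) : ∃ n, Derives A n {c} := by
  obtain ⟨L, hL, hc⟩ := h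
  exact ⟨L.length, L, hL, le_rfl, by simpa using hc⟩

end Derivable

lemma Resolvent.exists_subset_union {c₁ c₂ c b₁ b₂ d : Finset (V × Bool)}
    (h : Resolvent c₁ c₂ c) (h₁ : b₁ ⊆ c₁ ∪ d) (h₂ : b₂ ⊆ c₂ ∪ d) :
    b₁ ⊆ c ∪ d ∨ b₂ ⊆ c ∪ d ∨ ∃ b, Resolvent b₁ b₂ b ∧ b ⊆ c ∪ d := by
  obtain ⟨x, -, -, rfl⟩ := h
  by_cases hx₁ : (x, true) ∈ b₁
  · by_cases hx₂ : (x, false) ∈ b₂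
    · exact Or.inr <| Or.inr ⟨_, ⟨x, hx₁, hx₂, rfl⟩, by grind⟩
    · exact Or.inr <| Or.inl (by grind)
  · exact Or.inl (by grind)

lemma Derivable.exists_derivable_subset_union {A B : Set (Finset (V × Bool))} {c d : Finset (V × Bool)}
    (hB : ∀ a ∈ A, ∃ b ⊆ a ∪ d, Derivable B b) (hc : Derivable A c) :
    ∃ b ⊆ c ∪ d, Derivable B b := by
  refine hc.induction hB ?_
  rintro c₁ c₂ c ⟨b₁, hb₁, hB₁⟩ ⟨b₂, hb₂, hB₂⟩ hres
  rcases hres.exists_subset_union hb₁ hb₂ with h | h | ⟨b, hb, hbc⟩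
  exacts [⟨b₁, h, hB₁⟩, ⟨b₂, h, hB₂⟩, ⟨b, hbc, hB₁.resolvent hB₂ hb⟩]

/-- Weakening under a side literal set: if `A` is resolution-refutable and
every clause `c ∪ d` with `c ∈ A` contains some clause of `B`, then from `B`
one can derive some subclause of `d`. -/
theorem stmt19 {V : Type} [DecidableEq V]
    (A B : Set (Finset (V × Bool))) (d : Finset (V × Bool))
    (hA : ∃ n, Derives A n {(∅ : Finset (V × Bool))})
    (hB : ∀ c ∈ A, ∃ b ∈ B, b ⊆ c ∪ d) :
    ∃ d' ⊆ d, ∃ n, Derives B n {d'} := by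
  obtain ⟨n, hA⟩ := hA
  have hB' : ∀ c ∈ A, ∃ b ⊆ c ∪ d, Derivable B b := fun c hc =>
    let ⟨b, hbB, hb⟩ := hB c hc
    ⟨b, hb, .of_mem hbB⟩
  obtain ⟨b, hb, hbB⟩ := (Derivable.of_derives hA).exists_derivable_subset_union hB'
  exact ⟨b, by simpa using hb, hbB.exists_derives⟩
end
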